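/- (Gradient of the fractional potential.) For every agent i, every resource e, and every x ∈ (ℝ^E)^n, the partial derivative of Φ with respect to the coordinate x_{i,e} equals Σ_{S ⊆ {1,…,n}\{i}} (∏_{j ∈ S} x_{j,e}) (∏_{j ∉ S, j ≠ i} (1 − x_{j,e})) · c_e(|S| + 1). -/

import Mathlib

/-!
On each resource the potential is the multilinear extension of the set function
`w(S) = ∑_{ℓ ≤ |S|} c_e(ℓ)`, so it is affine in every single coordinate. Splitting the subsets
according to whether they contain `i`, its slope in `x_{i,e}` is the multilinear extension on
`[n] ∖ {i}` of the marginal `S ↦ w(S ∪ {i}) - w(S)`, which here is `c_e(|S| + 1)`.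
The other resources do not involve `x_{i,e}` at all.
-/

open Finset

section MultilinearExtension

variable {ι : Type*} [DecidableEq ι]

/-- The expected value of `w S` when each `j ∈ U` lies in `S` independently with
probability `p j`. -/
def multilinearExtension (U : Finset ι) (w : Finset ι → ℝ) (p : ι → ℝ) : ℝ :=
  ∑ S ∈ U.powerset, (∏ j ∈ S, p j) * (∏ j ∈ U \ S, (1 - p j)) * w S

theorem multilinearExtension_congr {U : Finset ι} {w w' : Finset ι → ℝ} {p q : ι → ℝ}
    (hw : ∀ S ⊆ U, w S = w' S) (hp : ∀ j ∈ U, p j = q j) :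
    multilinearExtension U w p = multilinearExtension U w' q := by
  refine sum_congr rfl fun S hS => ?_
  have hSU : S ⊆ U := mem_powerset.mp hS
  rw [hw S hSU, prod_congr rfl fun j hj => hp j (hSU hj),
    prod_congr rfl fun j hj => congrArg (1 - ·) (hp j (mem_sdiff.mp hj).1)]

theorem multilinearExtension_insert {U : Finset ι} {i : ι} (hi : i ∉ U)
    (w : Finset ι → ℝ) (p : ι → ℝ) :
    multilinearExtension (insert i U) w p =
      multilinearExtension U w p +
        p i * multilinearExtension U (fun S => w (insert i S) - w S) p := by
  rw [multilinearExtension, sum_powerset_insert hi, multilinearExtension, multilinearExtension,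
    mul_sum, ← sum_add_distrib, ← sum_add_distrib]
  refine sum_congr rfl fun S hS => ?_
  have hiS : i ∉ S := fun h => hi (mem_powerset.mp hS h)
  rw [insert_sdiff_of_notMem U hiS, insert_sdiff_insert, sdiff_insert_of_notMem hi,
    prod_insert hiS, prod_insert fun h => hi (mem_sdiff.mp h).1]
  ring

theorem hasDerivAt_multilinearExtension_update {U : Finset ι} {i : ι} (hi : i ∈ U)
    (w : Finset ι → ℝ) (p : ι → ℝ) (t : ℝ) :
    HasDerivAt (fun t => multilinearExtension U w (Function.update p i t))
      (multilinearExtension (U.erase i) (fun S => w (insert i S) - w S) p) t := by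
  have hoff : ∀ t, ∀ j ∈ U.erase i, Function.update p i t j = p j := fun t j hj =>
    Function.update_of_ne (ne_of_mem_erase hj) t p
  have haffine : ∀ t, multilinearExtension U w (Function.update p i t) =
      multilinearExtension (U.erase i) w p +
        t * multilinearExtension (U.erase i) (fun S => w (insert i S) - w S) p := by
    intro t
    conv_lhs => rw [← insert_erase hi]
    rw [multilinearExtension_insert (notMem_erase i U), Function.update_self,
      multilinearExtension_congr (fun _ _ => rfl) (hoff t), multilinearExtension_congr (fun _ _ => rfl) (hoff t)]
  simp only [haffine]
  exact (hasDerivAt_mul_const _).const_add _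

end MultilinearExtension

theorem sum_range_card_insert_sub {ι : Type*} [DecidableEq ι] {S : Finset ι} {i : ι}
    (hi : i ∉ S) (f : ℕ → ℝ) :
    ∑ ℓ ∈ range ((insert i S).card + 1), f ℓ - ∑ ℓ ∈ range (S.card + 1), f ℓ = f (S.card + 1) := by
  rw [card_insert_of_notMem hi, sum_range_succ, add_sub_cancel_left]

/-- **Gradient of the fractional potential.**
For the fractional potential
`Φ(x) = ∑_e ∑_{S ⊆ [n]} (∏_{j∈S} x_{j,e}) (∏_{j∉S} (1-x_{j,e})) ∑_{ℓ=0}^{|S|} c_e(ℓ)`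
on `(ℝ^E)^n`, the partial derivative with respect to the coordinate `x_{i,e}`
equals `∑_{S ⊆ [n]∖{i}} (∏_{j∈S} x_{j,e}) (∏_{j∉S, j≠i} (1-x_{j,e})) c_e(|S|+1)`. -/
theorem fractional_potential_partial_deriv
    {E : Type*} [Fintype E] [DecidableEq E]
    (n : ℕ)
    (c : E → ℕ → ℝ)
    (Φ : ((Fin n × E) → ℝ) → ℝ)
    (hΦ : ∀ x, Φ x = ∑ e : E, ∑ S ∈ (univ : Finset (Fin n)).powerset,
        (∏ j ∈ S, x (j, e)) * (∏ j ∈ univ \ S, (1 - x (j, e))) *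
          ∑ ℓ ∈ Finset.range (S.card + 1), c e ℓ)
    (i : Fin n) (e : E) (x : (Fin n × E) → ℝ) :
    deriv (fun t => Φ (Function.update x (i, e) t)) (x (i, e)) =
      ∑ S ∈ (univ.erase i).powerset,
        (∏ j ∈ S, x (j, e)) * (∏ j ∈ (univ.erase i) \ S, (1 - x (j, e))) *
          c e (S.card + 1) := by
  set w : E → Finset (Fin n) → ℝ := fun e S => ∑ ℓ ∈ range (S.card + 1), c e ℓ
  set slope := multilinearExtension (univ.erase i) (fun S => w e (insert i S) - w e S)
    fun j => x (j, e)
  have hresource : ∀ e' ∈ (univ : Finset E), HasDerivAt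
      (fun t => multilinearExtension univ (w e') fun j => Function.update x (i, e) t (j, e'))
      (if e' = e then slope else 0) (x (i, e)) := by
    intro e' _
    split_ifs with he'
    · subst he'
      have hslice : ∀ t, (fun j => Function.update x (i, e') t (j, e')) =
          Function.update (fun j => x (j, e')) i t :=
        Function.update_comp_eq_of_injective x (Prod.mk_left_injective e') i
      simpa only [hslice] using hasDerivAt_multilinearExtension_update (mem_univ i) _ _ _
    · have hslice : ∀ t, (fun j => Function.update x (i, e) t (j, e')) = fun j => x (j, e') :=
        fun t => Function.update_comp_eq_of_forall_ne x t fun _ h => he' (Prod.ext_iff.mp h).2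
      simpa only [hslice] using hasDerivAt_const _ _
  have hsum := HasDerivAt.fun_sum hresource
  simp only [sum_ite_eq', mem_univ, if_true] at hsum
  have hΦ_slice : (fun t => Φ (Function.update x (i, e) t)) = fun t =>
      ∑ e', multilinearExtension univ (w e') fun j => Function.update x (i, e) t (j, e') :=
    funext fun t => hΦ _
  rw [hΦ_slice, hsum.deriv]
  exact multilinearExtension_congr
    (fun S hS => sum_range_card_insert_sub (fun h => notMem_erase i univ (hS h)) _)
    fun _ _ => rfl
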